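/- If B ⊆ Σⁿ is (1,1)-guaranteed, then |B| ≥ |Σ|^{n−1}. -/

import Mathlib

/-!
Fix letters `a ≠ b`. For every word `u` of length `n - 1`, the words `u a` and `u b` are at edit
distance one, so `B` contains a word `v` within distance one of both. Between words of equal
length a single deletion forces an insertion, so an edit of cost one is a substitution; as `u a`
and `u b` differ only in the last letter, `v = u c` for some letter `c`. Hence dropping the last
letter maps `B` onto `Σ^(n-1)`.
-/

namespace Levenshtein

/-- Costs for edit operations (as in the removed Mathlib `Levenshtein.Cost`). -/
structure Cost (α β δ : Type*) where
  delete : α → δ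
  insert : β → δ
  substitute : α → β → δ

/-- Unit costs (as in the removed Mathlib `Levenshtein.defaultCost`). -/
def defaultCost {α : Type*} [DecidableEq α] : Cost α α ℕ where
  delete _ := 1
  insert _ := 1
  substitute a b := if a = b then 0 else 1

end Levenshtein

/-- Levenshtein distance, by the recurrences of the removed Mathlib `levenshtein`. -/
def levenshtein {α β δ : Type*} [AddZeroClass δ] [Min δ] (C : Levenshtein.Cost α β δ) :
    List α → List β → δ
  | [], [] => 0
  | [], y :: ys => C.insert y + levenshtein C [] ys
  | x :: xs, [] => C.delete x + levenshtein C xs []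
  | x :: xs, y :: ys =>
    min (C.delete x + levenshtein C xs (y :: ys))
      (min (C.insert y + levenshtein C (x :: xs) ys) (C.substitute x y + levenshtein C xs ys))
termination_by xs ys => xs.length + ys.length

/-- Edit (Levenshtein) distance between two length-`n` sequences over `α`. -/
def editDist {α : Type*} [DecidableEq α] {n : ℕ} (s t : Fin n → α) : ℕ :=
  levenshtein Levenshtein.defaultCost (List.ofFn s) (List.ofFn t)

/-- `B` is a `(d, r)`-guaranteed subset of `Σⁿ`: for every pair of sequences within
edit distance `d`, some sequence of `B` lies in both of their `r`-neighborhoods. -/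
def IsGuaranteed {α : Type*} [DecidableEq α] {n : ℕ} (d r : ℕ)
    (B : Set (Fin n → α)) : Prop :=
  ∀ s t : Fin n → α, editDist s t ≤ d →
    ∃ v ∈ B, editDist s v ≤ r ∧ editDist t v ≤ r

namespace Levenshtein

variable {α : Type*} [DecidableEq α]

@[simp] theorem defaultCost_delete (a : α) : (defaultCost : Cost α α ℕ).delete a = 1 :=
  rfl

@[simp] theorem defaultCost_insert (a : α) : (defaultCost : Cost α α ℕ).insert a = 1 :=
  rfl

@[simp] theorem defaultCost_substitute (a b : α) :
    (defaultCost : Cost α α ℕ).substitute a b = if a = b then 0 else 1 :=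
  rfl

end Levenshtein

open Levenshtein

section levenshtein

variable {α : Type*} [DecidableEq α]

local notation "lev" => levenshtein (defaultCost : Cost α α ℕ)

theorem levenshtein_defaultCost_self (l : List α) : lev l l = 0 := by
  induction l with
  | nil => simp [levenshtein]
  | cons x l ih => simp [levenshtein, ih]

theorem eq_of_levenshtein_defaultCost_eq_zero : ∀ {l₁ l₂ : List α}, lev l₁ l₂ = 0 → l₁ = l₂
  | [], [], _ => rfl
  | [], _ :: _, h | _ :: _, [], h => by simp [levenshtein] at h
  | x :: xs, y :: ys, h => by
    obtain ⟨rfl, h0⟩ : x = y ∧ lev xs ys = 0 := by simpa [levenshtein] using h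
    rw [eq_of_levenshtein_defaultCost_eq_zero h0]

theorem levenshtein_defaultCost_append_singleton_le_one (l : List α) (a b : α) :
    lev (l ++ [a]) (l ++ [b]) ≤ 1 := by
  induction l with
  | nil => by_cases h : a = b <;> simp [levenshtein, h]
  | cons x l ih => simp [levenshtein, ih]

/-- Between lists of equal length, deleting and inserting costs at least 2, so a single edit
must be a substitution. -/
theorem levenshtein_defaultCost_cons_cons_le_one {x y : α} {xs ys : List α}
    (hlen : xs.length = ys.length) (h : lev (x :: xs) (y :: ys) ≤ 1) :
    x = y ∧ lev xs ys ≤ 1 ∨ xs = ys := by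
  have hdel : lev xs (y :: ys) ≠ 0 := fun h0 => by
    simpa [hlen] using congrArg List.length (eq_of_levenshtein_defaultCost_eq_zero h0)
  have hins : lev (x :: xs) ys ≠ 0 := fun h0 => by
    simpa [hlen] using congrArg List.length (eq_of_levenshtein_defaultCost_eq_zero h0)
  simp only [levenshtein, defaultCost_delete, defaultCost_insert, defaultCost_substitute,
    min_le_iff] at h
  by_cases hxy : x = y
  · rw [if_pos hxy, zero_add] at h
    exact .inl ⟨hxy, by omega⟩
  · rw [if_neg hxy] at h
    exact .inr (eq_of_levenshtein_defaultCost_eq_zero (by omega))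

theorem exists_eq_append_singleton_of_levenshtein_defaultCost_le_one {a b : α} (hab : a ≠ b) :
    ∀ {u v : List α}, v.length = u.length + 1 → lev (u ++ [a]) v ≤ 1 → lev (u ++ [b]) v ≤ 1 →
      ∃ c, v = u ++ [c]
  | [], [c], _, _, _ => ⟨c, rfl⟩
  | [], [], hlen, _, _ | [], _ :: _ :: _, hlen, _, _ | _ :: _, [], hlen, _, _ => by
    simp at hlen
  | x :: u, y :: v, hlen, ha, hb => by
    have hlen' : v.length = u.length + 1 := by simpa using hlen
    rw [List.cons_append] at ha hb
    rcases levenshtein_defaultCost_cons_cons_le_one (by simp [hlen']) ha with ⟨rfl, ha'⟩ | rfl <;>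
      rcases levenshtein_defaultCost_cons_cons_le_one (by simp [hlen']) hb with ⟨hxy, hb'⟩ | hv
    · obtain ⟨c, rfl⟩ :=
        exists_eq_append_singleton_of_levenshtein_defaultCost_le_one hab hlen' ha' hb'
      exact ⟨c, rfl⟩
    · exact ⟨b, by rw [← hv, List.cons_append]⟩
    · exact ⟨a, by rw [hxy, List.cons_append]⟩
    · exact absurd (by simpa using hv.symm) hab

end levenshtein

theorem List.ofFn_snoc {α : Type*} {m : ℕ} (u : Fin m → α) (c : α) :
    List.ofFn (Fin.snoc u c : Fin (m + 1) → α) = List.ofFn u ++ [c] := by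
  rw [List.ofFn_succ']
  simp [Fin.snoc, List.concat_eq_append]

section editDist

variable {α : Type*} [DecidableEq α]

theorem editDist_self {n : ℕ} (s : Fin n → α) : editDist s s = 0 :=
  levenshtein_defaultCost_self _

theorem editDist_snoc_snoc_le_one {m : ℕ} (u : Fin m → α) (a b : α) :
    editDist (Fin.snoc u a : Fin (m + 1) → α) (Fin.snoc u b) ≤ 1 := by
  simpa only [editDist, List.ofFn_snoc] using levenshtein_defaultCost_append_singleton_le_one _ a b

theorem init_eq_of_editDist_snoc_le_one {m : ℕ} {a b : α} (hab : a ≠ b) {u : Fin m → α}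
    {v : Fin (m + 1) → α} (ha : editDist (Fin.snoc u a : Fin (m + 1) → α) v ≤ 1)
    (hb : editDist (Fin.snoc u b : Fin (m + 1) → α) v ≤ 1) : Fin.init v = u := by
  rw [editDist, List.ofFn_snoc] at ha hb
  obtain ⟨c, hc⟩ :=
    exists_eq_append_singleton_of_levenshtein_defaultCost_le_one hab (by simp) ha hb
  rw [← List.ofFn_snoc] at hc
  rw [List.ofFn_injective hc, Fin.init_snoc]

end editDist

namespace IsGuaranteed

variable {α : Type*} [DecidableEq α] {d r : ℕ}

theorem nonempty {n : ℕ} [Nonempty (Fin n → α)] {B : Set (Fin n → α)}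
    (hB : IsGuaranteed d r B) : B.Nonempty :=
  let s : Fin n → α := Classical.ofNonempty
  (hB s s ((editDist_self s).le.trans d.zero_le)).imp fun _ hv => hv.1

theorem image_init_eq_univ {m : ℕ} {B : Set (Fin (m + 1) → α)} (hB : IsGuaranteed d 1 B)
    (hd : 1 ≤ d) {a b : α} (hab : a ≠ b) : Fin.init '' B = Set.univ := by
  refine Set.eq_univ_of_forall fun u => ?_
  obtain ⟨v, hvB, hva, hvb⟩ := hB _ _ ((editDist_snoc_snoc_le_one u a b).trans hd)
  exact ⟨v, hvB, init_eq_of_editDist_snoc_le_one hab hva hvb⟩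

end IsGuaranteed

theorem stmt16 {α : Type*} [Fintype α] [DecidableEq α] (hα : 1 < Fintype.card α)
    {n : ℕ} (B : Set (Fin n → α)) (hB : IsGuaranteed 1 1 B) :
    Fintype.card α ^ (n - 1) ≤ Set.ncard B := by
  cases n with
  | zero => exact hB.nonempty.ncard_pos
  | succ m =>
    obtain ⟨a, b, hab⟩ := Fintype.exists_pair_of_one_lt_card hα
    calc Fintype.card α ^ (m + 1 - 1) = (Set.univ : Set (Fin m → α)).ncard := by simp
      _ = (Fin.init '' B).ncard := by rw [hB.image_init_eq_univ le_rfl hab]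
      _ ≤ B.ncard := Set.ncard_image_le B.toFinite
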